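/- Suppose W is continuously differentiable, c ∈ ℝ, S = {x ∈ R : W(x) < c} where R is open, closure(S) ⊆ R, and ⟨∇W(x), f(x)⟩ < 0 for all x ∈ S with x ≠ 0. Then any solution x(t) of ẋ = f(x) with x(0) ∈ S, x(t) ≠ 0 for all t in [0,T], remains in S for all t ∈ [0,T]. -/

import Mathlib

/-! A first exit time `t` from the open set `S` would have `x t ∈ closure S ⊆ R`, while `W ∘ x`
decreases on `[0, t]`, so `W (x t) < W (x 0) < c`: then `x t ∈ S` after all. -/

open Set

theorem ContinuousOn.mapsTo_Icc_of_forall_mapsTo_Ico {α X : Type*}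
    [ConditionallyCompleteLinearOrder α] [TopologicalSpace α] [OrderTopology α]
    [TopologicalSpace X] {S : Set X} (hS : IsOpen S)
    {γ : α → X} {a b : α} (hγ : ContinuousOn γ (Icc a b)) (ha : γ a ∈ S)
    (hstep : ∀ t ∈ Ioc a b, MapsTo γ (Ico a t) S → γ t ∈ S) :
    MapsTo γ (Icc a b) S := by
  by_contra hexit
  obtain ⟨t₁, ht₁, hγt₁⟩ := not_forall₂.mp hexit
  set B := Icc a b ∩ γ ⁻¹' Sᶜ
  have hBclosed : IsClosed B := hγ.preimage_isClosed_of_isClosed isClosed_Icc hS.isClosed_compl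
  have hBbdd : BddBelow B := ⟨a, fun t ht ↦ ht.1.1⟩
  obtain ⟨⟨hat₀, ht₀b⟩, hγt₀⟩ : sInf B ∈ B := hBclosed.csInf_mem ⟨t₁, ht₁, hγt₁⟩ hBbdd
  have hat₀' : a < sInf B := hat₀.lt_of_ne fun h ↦ hγt₀ (h ▸ ha)
  refine hγt₀ (hstep _ ⟨hat₀', ht₀b⟩ fun s hs ↦ ?_)
  by_contra hγs
  exact (csInf_le hBbdd ⟨⟨hs.1, hs.2.le.trans ht₀b⟩, hγs⟩).not_gt hs.2

section Lyapunov

variable {E : Type*} [NormedAddCommGroup E] [InnerProductSpace ℝ E] [CompleteSpace E]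

theorem HasGradientAt.comp_hasDerivAt {W : E → ℝ} {g : E} {x : ℝ → E} {v : E} {t : ℝ}
    (hW : HasGradientAt W g (x t)) (hx : HasDerivAt x v t) :
    HasDerivAt (W ∘ x) (inner ℝ g v) t :=
  hW.hasFDerivAt.comp_hasDerivAt t hx

theorem strictAntiOn_comp_of_inner_gradient_neg {W : E → ℝ} (hW : Differentiable ℝ W)
    {f : E → E} {x : ℝ → E} {a b : ℝ} (hx : ∀ t ∈ Icc a b, HasDerivAt x (f (x t)) t)
    (hneg : ∀ t ∈ Ioo a b, inner ℝ (gradient W (x t)) (f (x t)) < 0) :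
    StrictAntiOn (W ∘ x) (Icc a b) := by
  have hderiv : ∀ t ∈ Icc a b,
      HasDerivAt (W ∘ x) (inner ℝ (gradient W (x t)) (f (x t))) t := fun t ht ↦
    (hW (x t)).hasGradientAt.comp_hasDerivAt (hx t ht)
  refine strictAntiOn_of_deriv_neg (convex_Icc a b)
    (fun t ht ↦ (hderiv t ht).continuousAt.continuousWithinAt) fun t ht ↦ ?_
  rw [interior_Icc] at ht
  rw [(hderiv t (Ioo_subset_Icc_self ht)).deriv]
  exact hneg t ht

end Lyapunov

theorem trajectory_stays_in_sublevel_general {n : ℕ}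
    (R : Set (EuclideanSpace ℝ (Fin n))) (hRopen : IsOpen R)
    (W : EuclideanSpace ℝ (Fin n) → ℝ) (hW : ContDiff ℝ 1 W)
    (f : EuclideanSpace ℝ (Fin n) → EuclideanSpace ℝ (Fin n))
    (c : ℝ) (S : Set (EuclideanSpace ℝ (Fin n)))
    (hS : S = {x ∈ R | W x < c})
    (hScl : closure S ⊆ R)
    (hdecr : ∀ y ∈ S, y ≠ 0 → (inner ℝ (gradient W y) (f y) : ℝ) < 0)
    (T : ℝ)
    (x : ℝ → EuclideanSpace ℝ (Fin n))
    (hx : ∀ t ∈ Set.Icc (0:ℝ) T, HasDerivAt x (f (x t)) t)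
    (hx0 : x 0 ∈ S)
    (hxne : ∀ t ∈ Set.Icc (0:ℝ) T, x t ≠ 0) :
    ∀ t ∈ Set.Icc (0:ℝ) T, x t ∈ S := by
  subst hS
  have hSopen : IsOpen {y ∈ R | W y < c} := hRopen.inter (isOpen_lt hW.continuous continuous_const)
  have hxcont : ContinuousOn x (Icc 0 T) := fun t ht ↦ (hx t ht).continuousAt.continuousWithinAt
  refine hxcont.mapsTo_Icc_of_forall_mapsTo_Ico hSopen hx0 fun t ⟨ht0, htT⟩ hbefore ↦ ⟨?_, ?_⟩
  · have hcl : x t ∈ closure {y ∈ R | W y < c} :=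
      ((hx t ⟨ht0.le, htT⟩).continuousAt.continuousWithinAt).mem_closure
        (by rw [closure_Ico ht0.ne]; exact ⟨ht0.le, le_rfl⟩) hbefore
    exact hScl hcl
  · have hanti : StrictAntiOn (W ∘ x) (Icc 0 t) :=
      strictAntiOn_comp_of_inner_gradient_neg (hW.differentiable one_ne_zero)
        (fun s hs ↦ hx s ⟨hs.1, hs.2.trans htT⟩) fun s hs ↦
          hdecr _ (hbefore ⟨hs.1.le, hs.2⟩) (hxne s ⟨hs.1.le, hs.2.le.trans htT⟩)
    exact (hanti ⟨le_rfl, ht0.le⟩ ⟨ht0.le, le_rfl⟩ ht0).trans hx0.2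

theorem trajectory_stays_in_sublevel {n : ℕ}
    (R : Set (EuclideanSpace ℝ (Fin n))) (hRopen : IsOpen R)
    (W : EuclideanSpace ℝ (Fin n) → ℝ) (hW : ContDiff ℝ 1 W)
    (f : EuclideanSpace ℝ (Fin n) → EuclideanSpace ℝ (Fin n)) (hf : Continuous f)
    (c : ℝ) (S : Set (EuclideanSpace ℝ (Fin n)))
    (hS : S = {x ∈ R | W x < c})
    (hScl : closure S ⊆ R)
    (hdecr : ∀ y ∈ S, y ≠ 0 → (inner ℝ (gradient W y) (f y) : ℝ) < 0)
    (T : ℝ) (hT : 0 ≤ T)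
    (x : ℝ → EuclideanSpace ℝ (Fin n))
    (hx : ∀ t ∈ Set.Icc (0:ℝ) T, HasDerivAt x (f (x t)) t)
    (hx0 : x 0 ∈ S)
    (hxne : ∀ t ∈ Set.Icc (0:ℝ) T, x t ≠ 0) :
    ∀ t ∈ Set.Icc (0:ℝ) T, x t ∈ S :=
  trajectory_stays_in_sublevel_general R hRopen W hW f c S hS hScl hdecr T x hx hx0 hxne
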